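/- (One-step geometric decrease of finite-horizon values, eq. (21) of Theorem 1's proof.) Under Condition 1 and Assumption SA1, let α ∈ (0,1) satisfy αP̄ ⪯ Q_i for all i ∈ 𝕄. Then for every d ≥ 1, every x ∈ ℝⁿ and every (u,i) ∈ H*_d(x), V*_{d−1}(A_ix + B_iu) ≤ (1−α)·V*_d(x). -/

import Mathlib

open Matrix Filter
open scoped ENNReal

/-- Data of a switched linear-quadratic problem with `M` modes,
state dimension `n` and continuous-input dimension `m`. -/
structure SwitchedLQR (n m M : ℕ) where
  A : Fin M → Matrix (Fin n) (Fin n) ℝ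
  B : Fin M → Matrix (Fin n) (Fin m) ℝ
  Q : Fin M → Matrix (Fin n) (Fin n) ℝ
  R : Fin M → Matrix (Fin m) (Fin m) ℝ

namespace SwitchedLQR

variable {n m M : ℕ}

/-- Stage cost `ℓ(x,u,i) = xᵀQᵢx + uᵀRᵢu`. -/
def ell (S : SwitchedLQR n m M) (x : Fin n → ℝ) (u : Fin m → ℝ) (i : Fin M) : ℝ :=
  x ⬝ᵥ ((S.Q i) *ᵥ x) + u ⬝ᵥ ((S.R i) *ᵥ u)

/-- Riccati operator `𝓡ᵢ(P)`. -/
noncomputable def Ric (S : SwitchedLQR n m M) (i : Fin M)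
    (P : Matrix (Fin n) (Fin n) ℝ) : Matrix (Fin n) (Fin n) ℝ :=
  S.Q i + (S.A i)ᵀ * P * S.A i -
    (S.A i)ᵀ * P * S.B i * (S.R i + (S.B i)ᵀ * P * S.B i)⁻¹ * ((S.B i)ᵀ * P * S.A i)

/-- `P_𝐢 = 𝓡_{i₀}(𝓡_{i₁}(⋯𝓡_{i_{d-1}}(P̲)⋯))` for a finite mode sequence `𝐢`. -/
noncomputable def Pseq (S : SwitchedLQR n m M) (Pund : Matrix (Fin n) (Fin n) ℝ)
    (l : List (Fin M)) : Matrix (Fin n) (Fin n) ℝ :=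
  l.foldr S.Ric Pund

/-- Solution `φ(k,x,u,i)` of the switched linear system. -/
def phi (S : SwitchedLQR n m M) (x : Fin n → ℝ) (u : ℕ → Fin m → ℝ) (is : ℕ → Fin M) :
    ℕ → Fin n → ℝ
  | 0 => x
  | k + 1 => S.A (is k) *ᵥ (phi S x u is k) + S.B (is k) *ᵥ (u k)

/-- Finite-horizon cost `J_d` with terminal cost matrix `P̲`. -/
noncomputable def Jd (S : SwitchedLQR n m M) (Pund : Matrix (Fin n) (Fin n) ℝ) (d : ℕ)
    (x : Fin n → ℝ) (u : ℕ → Fin m → ℝ) (is : ℕ → Fin M) : ℝ :=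
  (∑ k ∈ Finset.range d, S.ell (S.phi x u is k) (u k) (is k)) +
    (S.phi x u is d) ⬝ᵥ (Pund *ᵥ (S.phi x u is d))

/-- Infinite-horizon cost `J(x,u,i) ∈ [0,∞]`. -/
noncomputable def Jinf (S : SwitchedLQR n m M) (x : Fin n → ℝ) (u : ℕ → Fin m → ℝ)
    (is : ℕ → Fin M) : ℝ≥0∞ :=
  ∑' k : ℕ, ENNReal.ofReal (S.ell (S.phi x u is k) (u k) (is k))

/-- Optimal value function `V*(x)`. -/
noncomputable def Vstar (S : SwitchedLQR n m M) (x : Fin n → ℝ) : ℝ≥0∞ :=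
  ⨅ (u : ℕ → Fin m → ℝ) (is : ℕ → Fin M), S.Jinf x u is

/-- `V*_d(x)`: minimum over length-`d` mode sequences `𝐢` of `xᵀP_𝐢x`. -/
noncomputable def Vd (S : SwitchedLQR n m M) (Pund : Matrix (Fin n) (Fin n) ℝ) (d : ℕ)
    (x : Fin n → ℝ) : ℝ :=
  sInf {r : ℝ | ∃ l : List (Fin M), l.length = d ∧ r = x ⬝ᵥ ((S.Pseq Pund l) *ᵥ x)}

/-- Condition 1: the LMI block matrix is positive semi-definite for every mode. -/
def Cond1 (S : SwitchedLQR n m M) (Pund : Matrix (Fin n) (Fin n) ℝ) : Prop :=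
  ∀ i : Fin M,
    (Matrix.fromBlocks
      ((S.A i)ᵀ * Pund * S.A i - Pund + S.Q i) ((S.A i)ᵀ * Pund * S.B i)
      ((S.B i)ᵀ * Pund * S.A i) (S.R i + (S.B i)ᵀ * Pund * S.B i)).PosSemidef

/-- Assumption SA1. -/
def SA1 (S : SwitchedLQR n m M) (Pbar : Matrix (Fin n) (Fin n) ℝ) : Prop :=
  Pbar.PosDef ∧
    ∀ x : Fin n → ℝ, ∃ (u : ℕ → Fin m → ℝ) (is : ℕ → Fin M),
      S.Jinf x u is = S.Vstar x ∧ S.Vstar x ≤ ENNReal.ofReal (x ⬝ᵥ (Pbar *ᵥ x))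

/-- `H*_d(x)`. -/
noncomputable def HStar (S : SwitchedLQR n m M) (Pund : Matrix (Fin n) (Fin n) ℝ) (d : ℕ)
    (x : Fin n → ℝ) : Set ((Fin m → ℝ) × Fin M) :=
  {p | S.Vd Pund d x =
        S.ell x p.1 p.2 + S.Vd Pund (d - 1) (S.A p.2 *ᵥ x + S.B p.2 *ᵥ p.1)}

/-- `F_d(x)`. -/
noncomputable def Fd (S : SwitchedLQR n m M) (Pund : Matrix (Fin n) (Fin n) ℝ) (d : ℕ)
    (x : Fin n → ℝ) : Set (Fin n → ℝ) :=
  {y | ∃ p ∈ S.HStar Pund d x, y = S.A p.2 *ᵥ x + S.B p.2 *ᵥ p.1}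

end SwitchedLQR

/-!
The value `V*_d(x)` is the optimal `d`-step cost with terminal cost `P̲`: the Riccati
operator is the Schur complement of a positive semidefinite block matrix, so
`V*_d(x) ≤ ℓ(x,u,i) + V*_{d-1}(Aᵢx + Bᵢu)` and `V*_d` is a lower bound of every finite-horizon
cost `J_d`. Condition 1 makes `J_d` nondecreasing in `d`, and for an input of finite
infinite-horizon cost the terminal term vanishes (`P̲` is dominated by a multiple of every `Qᵢ`),
so `V*_d ≤ V* ≤ xᵀP̄x`. On `H*_d(x)` this gives
`V*_{d-1}(Aᵢx + Bᵢu) = V*_d(x) - ℓ(x,u,i) ≤ V*_d(x) - α xᵀP̄x ≤ (1 - α) V*_d(x)`.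
-/

open scoped Topology

namespace Matrix

variable {a b : Type*} [Fintype a] [Fintype b]

lemma PosSemidef.dotProduct_mulVec_self_nonneg {P : Matrix a a ℝ} (hP : P.PosSemidef)
    (x : a → ℝ) : 0 ≤ x ⬝ᵥ (P *ᵥ x) := by
  simpa using hP.dotProduct_mulVec_nonneg x

lemma dotProduct_mulVec_le_of_posSemidef_sub {P Q : Matrix a a ℝ} (h : (Q - P).PosSemidef)
    (x : a → ℝ) : x ⬝ᵥ (P *ᵥ x) ≤ x ⬝ᵥ (Q *ᵥ x) := by
  have := h.dotProduct_mulVec_self_nonneg x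
  rw [sub_mulVec, dotProduct_sub] at this
  linarith

lemma dotProduct_algebraMap_mulVec [DecidableEq a] (r : ℝ) (x : a → ℝ) :
    x ⬝ᵥ (algebraMap ℝ (Matrix a a ℝ) r *ᵥ x) = r * (x ⬝ᵥ x) := by
  simp [Algebra.algebraMap_eq_smul_one, smul_mulVec, dotProduct_smul]

open scoped MatrixOrder in
lemma PosDef.exists_dotProduct_mulVec_le_mul [DecidableEq a] {P Q : Matrix a a ℝ}
    (hQ : Q.PosDef) (hP : P.IsHermitian) :
    ∃ c, ∀ x, x ⬝ᵥ (P *ᵥ x) ≤ c * (x ⬝ᵥ (Q *ᵥ x)) := by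
  obtain ⟨r, hr, hrQ⟩ : ∃ r > 0, algebraMap ℝ (Matrix a a ℝ) r ≤ Q := by
    rcases subsingleton_or_nontrivial (Matrix a a ℝ) with _ | _
    · exact ⟨1, one_pos, (Subsingleton.elim _ _).le⟩
    exact (CFC.exists_pos_algebraMap_le_iff hQ.isHermitian).2
      fun _ hx => hQ.isStrictlyPositive.spectrum_pos hx
  obtain ⟨s, hs⟩ :=
    (isCompact_iff_compactSpace.mpr inferInstance : IsCompact (spectrum ℝ P)).bddAbove
  have hPs : P ≤ algebraMap ℝ (Matrix a a ℝ) s := le_algebraMap_of_spectrum_le fun _ hx => hs hx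
  refine ⟨max s 0 / r, fun x => ?_⟩
  have hPx := dotProduct_mulVec_le_of_posSemidef_sub hPs x
  have hQx := dotProduct_mulVec_le_of_posSemidef_sub hrQ x
  rw [dotProduct_algebraMap_mulVec] at hPx hQx
  have hxx : 0 ≤ x ⬝ᵥ x := dotProduct_self_star_nonneg x
  calc x ⬝ᵥ (P *ᵥ x) ≤ max s 0 * (x ⬝ᵥ x) := hPx.trans (by gcongr; exact le_max_left _ _)
    _ = max s 0 / r * (r * (x ⬝ᵥ x)) := by field_simp
    _ ≤ max s 0 / r * (x ⬝ᵥ (Q *ᵥ x)) := by gcongr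

lemma dotProduct_transpose_mul_mul_mulVec {c : Type*} [Fintype c] (P : Matrix a a ℝ)
    (C : Matrix a b ℝ) (D : Matrix a c ℝ) (x : b → ℝ) (v : c → ℝ) :
    x ⬝ᵥ ((Cᵀ * P * D) *ᵥ v) = (C *ᵥ x) ⬝ᵥ (P *ᵥ (D *ᵥ v)) := by
  rw [← mulVec_mulVec, ← mulVec_mulVec, mulVec_transpose, dotProduct_comm,
    ← dotProduct_mulVec, dotProduct_comm]

omit [Fintype b] in
lemma IsHermitian.conjTranspose_transpose_mul_mul {P : Matrix a a ℝ} (hP : P.IsHermitian)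
    (A : Matrix a a ℝ) (B : Matrix a b ℝ) : (Aᵀ * P * B)ᴴ = Bᵀ * P * A := by
  rw [conjTranspose_eq_transpose_of_trivial, transpose_mul, transpose_mul, transpose_transpose,
    ← conjTranspose_eq_transpose_of_trivial P, hP.eq, Matrix.mul_assoc]

lemma PosSemidef.transpose_mul_mul_same {P : Matrix a a ℝ} (hP : P.PosSemidef)
    (B : Matrix a b ℝ) : (Bᵀ * P * B).PosSemidef := by
  simpa [conjTranspose_eq_transpose_of_trivial] using hP.conjTranspose_mul_mul_same B

lemma sumElim_dotProduct_fromBlocks_mulVec_sumElim (A : Matrix a a ℝ) (B : Matrix a b ℝ)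
    (P : Matrix a a ℝ) (R : Matrix b b ℝ) (E : Matrix a a ℝ) (x : a → ℝ) (u : b → ℝ) :
    Sum.elim x u ⬝ᵥ
        (fromBlocks E (Aᵀ * P * B) (Bᵀ * P * A) (R + Bᵀ * P * B) *ᵥ Sum.elim x u) =
      x ⬝ᵥ (E *ᵥ x) - x ⬝ᵥ ((Aᵀ * P * A) *ᵥ x) + u ⬝ᵥ (R *ᵥ u) +
        (A *ᵥ x + B *ᵥ u) ⬝ᵥ (P *ᵥ (A *ᵥ x + B *ᵥ u)) := by
  simp only [fromBlocks_mulVec, Sum.elim_comp_inl, Sum.elim_comp_inr, sumElim_dotProduct_sumElim,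
    add_mulVec, mulVec_add, dotProduct_add, add_dotProduct, dotProduct_transpose_mul_mul_mulVec]
  ring

section Riccati

variable (A : Matrix a a ℝ) (B : Matrix a b ℝ) (Q : Matrix a a ℝ) {P : Matrix a a ℝ}
  {R : Matrix b b ℝ} [DecidableEq b]

lemma riccati_dotProduct_mulVec_le (hP : P.PosSemidef) (hR : R.PosDef) (x : a → ℝ)
    (u : b → ℝ) :
    x ⬝ᵥ ((Q + Aᵀ * P * A - Aᵀ * P * B * (R + Bᵀ * P * B)⁻¹ * (Bᵀ * P * A)) *ᵥ x) ≤
      x ⬝ᵥ (Q *ᵥ x) + u ⬝ᵥ (R *ᵥ u) + (A *ᵥ x + B *ᵥ u) ⬝ᵥ (P *ᵥ (A *ᵥ x + B *ᵥ u)) := by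
  have hK : (R + Bᵀ * P * B).PosDef := hR.add_posSemidef (hP.transpose_mul_mul_same B)
  have := hK.isUnit.invertible
  set G := Aᵀ * P * B * (R + Bᵀ * P * B)⁻¹ * (Bᵀ * P * A)
  -- the Schur complement of this block matrix is `G - G = 0`
  have hblock : (fromBlocks G (Aᵀ * P * B) (Bᵀ * P * A) (R + Bᵀ * P * B)).PosSemidef := by
    rw [← hP.isHermitian.conjTranspose_transpose_mul_mul A B, PosDef.fromBlocks₂₂ _ _ hK,
      hP.isHermitian.conjTranspose_transpose_mul_mul A B, sub_self]
    exact .zero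
  have := hblock.dotProduct_mulVec_self_nonneg (Sum.elim x u)
  rw [sumElim_dotProduct_fromBlocks_mulVec_sumElim] at this
  simp only [sub_mulVec, add_mulVec, dotProduct_sub, dotProduct_add]
  linarith

lemma riccati_posSemidef (hQ : Q.PosSemidef) (hP : P.PosSemidef) (hR : R.PosDef) :
    (Q + Aᵀ * P * A - Aᵀ * P * B * (R + Bᵀ * P * B)⁻¹ * (Bᵀ * P * A)).PosSemidef := by
  have hK : (R + Bᵀ * P * B).PosDef := hR.add_posSemidef (hP.transpose_mul_mul_same B)
  have := hK.isUnit.invertible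
  rw [← hP.isHermitian.conjTranspose_transpose_mul_mul A B, ← PosDef.fromBlocks₂₂ _ _ hK,
    hP.isHermitian.conjTranspose_transpose_mul_mul A B]
  refine .of_dotProduct_mulVec_nonneg ?_ fun v => ?_
  · exact .fromBlocks (hQ.add (hP.transpose_mul_mul_same A)).isHermitian
      (hP.isHermitian.conjTranspose_transpose_mul_mul A B) hK.isHermitian
  · rw [star_trivial, ← Sum.elim_comp_inl_inr v, sumElim_dotProduct_fromBlocks_mulVec_sumElim,
      add_mulVec, dotProduct_add]
    linarith [hQ.dotProduct_mulVec_self_nonneg (v ∘ Sum.inl),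
      hR.posSemidef.dotProduct_mulVec_self_nonneg (v ∘ Sum.inr),
      hP.dotProduct_mulVec_self_nonneg (A *ᵥ (v ∘ Sum.inl) + B *ᵥ (v ∘ Sum.inr))]

end Riccati

end Matrix

namespace SwitchedLQR

variable {n m M : ℕ} (S : SwitchedLQR n m M) {Pund : Matrix (Fin n) (Fin n) ℝ}

lemma dotProduct_Q_mulVec_le_ell (hR : ∀ i, (S.R i).PosDef) (x : Fin n → ℝ) (u : Fin m → ℝ)
    (i : Fin M) : x ⬝ᵥ (S.Q i *ᵥ x) ≤ S.ell x u i :=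
  le_add_of_nonneg_right ((hR i).posSemidef.dotProduct_mulVec_self_nonneg u)

lemma ell_nonneg (hQ : ∀ i, (S.Q i).PosDef) (hR : ∀ i, (S.R i).PosDef) (x : Fin n → ℝ)
    (u : Fin m → ℝ) (i : Fin M) : 0 ≤ S.ell x u i :=
  ((hQ i).posSemidef.dotProduct_mulVec_self_nonneg x).trans (S.dotProduct_Q_mulVec_le_ell hR x u i)

lemma dotProduct_Ric_mulVec_le (hR : ∀ i, (S.R i).PosDef) {P : Matrix (Fin n) (Fin n) ℝ}
    (hP : P.PosSemidef) (i : Fin M) (x : Fin n → ℝ) (u : Fin m → ℝ) :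
    x ⬝ᵥ (S.Ric i P *ᵥ x) ≤
      S.ell x u i + (S.A i *ᵥ x + S.B i *ᵥ u) ⬝ᵥ (P *ᵥ (S.A i *ᵥ x + S.B i *ᵥ u)) :=
  riccati_dotProduct_mulVec_le _ _ _ hP (hR i) x u

lemma Pseq_posSemidef (hQ : ∀ i, (S.Q i).PosDef) (hR : ∀ i, (S.R i).PosDef)
    (hPund : Pund.PosSemidef) (l : List (Fin M)) : (S.Pseq Pund l).PosSemidef := by
  induction l with
  | nil => exact hPund
  | cons i l ih => exact riccati_posSemidef _ _ _ (hQ i).posSemidef ih (hR i)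

lemma finite_Pseq_values (d : ℕ) (x : Fin n → ℝ) :
    {r : ℝ | ∃ l : List (Fin M), l.length = d ∧ r = x ⬝ᵥ (S.Pseq Pund l *ᵥ x)}.Finite :=
  ((List.finite_length_eq (Fin M) d).image fun l => x ⬝ᵥ (S.Pseq Pund l *ᵥ x)).subset
    fun _ ⟨l, hl, hr⟩ => ⟨l, hl, hr.symm⟩

lemma Vd_le (l : List (Fin M)) (x : Fin n → ℝ) :
    S.Vd Pund l.length x ≤ x ⬝ᵥ (S.Pseq Pund l *ᵥ x) :=
  csInf_le (S.finite_Pseq_values _ x).bddBelow ⟨l, rfl, rfl⟩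

lemma exists_Vd_eq [Nonempty (Fin M)] (d : ℕ) (x : Fin n → ℝ) :
    ∃ l : List (Fin M), l.length = d ∧ S.Vd Pund d x = x ⬝ᵥ (S.Pseq Pund l *ᵥ x) := by
  refine Set.Nonempty.csInf_mem ?_ (S.finite_Pseq_values d x)
  exact ⟨_, List.replicate d (Classical.arbitrary _), List.length_replicate, rfl⟩

lemma Vd_zero (x : Fin n → ℝ) : S.Vd Pund 0 x = x ⬝ᵥ (Pund *ᵥ x) := by
  have : {r : ℝ | ∃ l : List (Fin M), l.length = 0 ∧ r = x ⬝ᵥ (S.Pseq Pund l *ᵥ x)} =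
      {x ⬝ᵥ (Pund *ᵥ x)} := by
    simp only [List.length_eq_zero_iff, exists_eq_left]
    rfl
  rw [Vd, this, csInf_singleton]

lemma Vd_succ_le (hQ : ∀ i, (S.Q i).PosDef) (hR : ∀ i, (S.R i).PosDef)
    (hPund : Pund.PosSemidef) (d : ℕ) (x : Fin n → ℝ) (u : Fin m → ℝ) (i : Fin M) :
    S.Vd Pund (d + 1) x ≤ S.ell x u i + S.Vd Pund d (S.A i *ᵥ x + S.B i *ᵥ u) := by
  have : Nonempty (Fin M) := ⟨i⟩
  obtain ⟨l, rfl, hl⟩ := S.exists_Vd_eq (Pund := Pund) d (S.A i *ᵥ x + S.B i *ᵥ u)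
  calc S.Vd Pund (l.length + 1) x ≤ x ⬝ᵥ (S.Pseq Pund (i :: l) *ᵥ x) := S.Vd_le (i :: l) x
    _ ≤ _ := S.dotProduct_Ric_mulVec_le hR (S.Pseq_posSemidef hQ hR hPund l) i x u
    _ = _ := by rw [hl]

lemma phi_succ_eq_phi_shift (x : Fin n → ℝ) (u : ℕ → Fin m → ℝ) (is : ℕ → Fin M) (k : ℕ) :
    S.phi x u is (k + 1) =
      S.phi (S.A (is 0) *ᵥ x + S.B (is 0) *ᵥ u 0) (fun j => u (j + 1)) (fun j => is (j + 1)) k := by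
  induction k with
  | zero => rfl
  | succ k ih => rw [phi, ih]; rfl

lemma Jd_succ (d : ℕ) (x : Fin n → ℝ) (u : ℕ → Fin m → ℝ) (is : ℕ → Fin M) :
    S.Jd Pund (d + 1) x u is =
      S.ell x (u 0) (is 0) + S.Jd Pund d (S.A (is 0) *ᵥ x + S.B (is 0) *ᵥ u 0)
        (fun j => u (j + 1)) (fun j => is (j + 1)) := by
  simp only [Jd, Finset.sum_range_succ', phi_succ_eq_phi_shift]
  rw [phi]
  ring

lemma Vd_le_Jd (hQ : ∀ i, (S.Q i).PosDef) (hR : ∀ i, (S.R i).PosDef)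
    (hPund : Pund.PosSemidef) (d : ℕ) (x : Fin n → ℝ) (u : ℕ → Fin m → ℝ) (is : ℕ → Fin M) :
    S.Vd Pund d x ≤ S.Jd Pund d x u is := by
  induction d generalizing x u is with
  | zero => simp [S.Vd_zero, Jd, phi]
  | succ d ih =>
    rw [S.Jd_succ]
    exact (S.Vd_succ_le hQ hR hPund d x (u 0) (is 0)).trans (add_le_add_right (ih _ _ _) _)

lemma Cond1.dotProduct_mulVec_le {S : SwitchedLQR n m M} (hC : S.Cond1 Pund) (i : Fin M)
    (x : Fin n → ℝ) (u : Fin m → ℝ) :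
    x ⬝ᵥ (Pund *ᵥ x) ≤
      S.ell x u i + (S.A i *ᵥ x + S.B i *ᵥ u) ⬝ᵥ (Pund *ᵥ (S.A i *ᵥ x + S.B i *ᵥ u)) := by
  have := (hC i).dotProduct_mulVec_self_nonneg (Sum.elim x u)
  rw [sumElim_dotProduct_fromBlocks_mulVec_sumElim] at this
  simp only [add_mulVec, sub_mulVec, dotProduct_add, dotProduct_sub] at this
  simp only [ell]
  linarith

lemma Jd_mono (hC : S.Cond1 Pund) (x : Fin n → ℝ) (u : ℕ → Fin m → ℝ) (is : ℕ → Fin M) :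
    Monotone fun d => S.Jd Pund d x u is := by
  refine monotone_nat_of_le_succ fun d => ?_
  simp only [Jd, Finset.sum_range_succ]
  rw [phi]
  linarith [hC.dotProduct_mulVec_le (is d) (S.phi x u is d) (u d)]

lemma exists_dotProduct_mulVec_le_mul_ell (hQ : ∀ i, (S.Q i).PosDef)
    (hR : ∀ i, (S.R i).PosDef) (hPund : Pund.PosSemidef) :
    ∃ c, ∀ x u i, x ⬝ᵥ (Pund *ᵥ x) ≤ c * S.ell x u i := by
  choose c hc using fun i => (hQ i).exists_dotProduct_mulVec_le_mul hPund.isHermitian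
  obtain ⟨C, hC⟩ := (Set.finite_range c).bddAbove
  refine ⟨max C 0, fun x u i => ?_⟩
  have hQx := (hQ i).posSemidef.dotProduct_mulVec_self_nonneg x
  calc x ⬝ᵥ (Pund *ᵥ x) ≤ c i * (x ⬝ᵥ (S.Q i *ᵥ x)) := hc i x
    _ ≤ max C 0 * (x ⬝ᵥ (S.Q i *ᵥ x)) := by gcongr; exact (hC ⟨i, rfl⟩).trans (le_max_left _ _)
    _ ≤ max C 0 * S.ell x u i := by gcongr; exact S.dotProduct_Q_mulVec_le_ell hR x u i

lemma tendsto_Jd (hQ : ∀ i, (S.Q i).PosDef) (hR : ∀ i, (S.R i).PosDef)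
    (hPund : Pund.PosSemidef) {x : Fin n → ℝ} {u : ℕ → Fin m → ℝ} {is : ℕ → Fin M}
    (hJ : S.Jinf x u is ≠ ⊤) :
    Tendsto (fun d => S.Jd Pund d x u is) atTop (𝓝 (S.Jinf x u is).toReal) := by
  have hsum : HasSum (fun k => S.ell (S.phi x u is k) (u k) (is k)) (S.Jinf x u is).toReal := by
    rw [Jinf, ENNReal.tsum_toReal_eq fun _ => ENNReal.ofReal_ne_top]
    simpa only [ENNReal.toReal_ofReal (S.ell_nonneg hQ hR _ _ _)] using
      (ENNReal.summable_toReal hJ).hasSum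
  obtain ⟨c, hc⟩ := S.exists_dotProduct_mulVec_le_mul_ell hQ hR hPund
  have hterminal : Tendsto (fun d => S.phi x u is d ⬝ᵥ (Pund *ᵥ S.phi x u is d)) atTop (𝓝 0) :=
    squeeze_zero (fun _ => hPund.dotProduct_mulVec_self_nonneg _)
      (fun d => hc _ (u d) (is d))
      (by simpa using hsum.summable.tendsto_atTop_zero.const_mul c)
  simpa only [Jd, add_zero] using hsum.tendsto_sum_nat.add hterminal

lemma ofReal_Vd_le_Jinf (hQ : ∀ i, (S.Q i).PosDef) (hR : ∀ i, (S.R i).PosDef)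
    (hPund : Pund.PosSemidef) (hC : S.Cond1 Pund) (d : ℕ) (x : Fin n → ℝ)
    (u : ℕ → Fin m → ℝ) (is : ℕ → Fin M) :
    ENNReal.ofReal (S.Vd Pund d x) ≤ S.Jinf x u is := by
  by_cases hJ : S.Jinf x u is = ⊤
  · simp [hJ]
  rw [← ENNReal.ofReal_toReal hJ]
  refine ENNReal.ofReal_le_ofReal (ge_of_tendsto (S.tendsto_Jd hQ hR hPund hJ) ?_)
  filter_upwards [eventually_ge_atTop d] with N hN
  exact (S.Vd_le_Jd hQ hR hPund d x u is).trans (S.Jd_mono hC x u is hN)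

lemma Vd_le_of_SA1 (hQ : ∀ i, (S.Q i).PosDef) (hR : ∀ i, (S.R i).PosDef)
    (hPund : Pund.PosSemidef) (hC : S.Cond1 Pund) {Pbar : Matrix (Fin n) (Fin n) ℝ}
    (hSA : S.SA1 Pbar) (d : ℕ) (x : Fin n → ℝ) : S.Vd Pund d x ≤ x ⬝ᵥ (Pbar *ᵥ x) := by
  obtain ⟨hPbar, hopt⟩ := hSA
  obtain ⟨-, -, -, hVstar⟩ := hopt x
  have hVd : ENNReal.ofReal (S.Vd Pund d x) ≤ S.Vstar x :=
    le_iInf₂ fun u is => S.ofReal_Vd_le_Jinf hQ hR hPund hC d x u is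
  exact (ENNReal.ofReal_le_ofReal_iff (hPbar.posSemidef.dotProduct_mulVec_self_nonneg x)).1
    (hVd.trans hVstar)

end SwitchedLQR

theorem stmt12_general {n m M : ℕ}
    (S : SwitchedLQR n m M)
    (hQ : ∀ i : Fin M, (S.Q i).PosDef) (hR : ∀ i : Fin M, (S.R i).PosDef)
    (Pund : Matrix (Fin n) (Fin n) ℝ) (hPund : Pund.PosSemidef)
    (hC : S.Cond1 Pund)
    (Pbar : Matrix (Fin n) (Fin n) ℝ) (hSA : S.SA1 Pbar)
    (α : ℝ) (hα0 : 0 < α)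
    (hαQ : ∀ i : Fin M, (S.Q i - α • Pbar).PosSemidef) :
    ∀ (d : ℕ), 1 ≤ d → ∀ (x : Fin n → ℝ) (u : Fin m → ℝ) (i : Fin M),
      (u, i) ∈ S.HStar Pund d x →
      S.Vd Pund (d - 1) (S.A i *ᵥ x + S.B i *ᵥ u) ≤ (1 - α) * S.Vd Pund d x := by
  intro d _ x u i hmem
  have hVd := S.Vd_le_of_SA1 hQ hR hPund hC hSA d x
  have hαPbar : α * (x ⬝ᵥ (Pbar *ᵥ x)) ≤ x ⬝ᵥ (S.Q i *ᵥ x) := by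
    simpa [smul_mulVec, dotProduct_smul] using dotProduct_mulVec_le_of_posSemidef_sub (hαQ i) x
  have hQell := S.dotProduct_Q_mulVec_le_ell hR x u i
  have hbellman : S.Vd Pund d x = S.ell x u i + S.Vd Pund (d - 1) (S.A i *ᵥ x + S.B i *ᵥ u) :=
    hmem
  linarith [mul_le_mul_of_nonneg_left hVd hα0.le]

/-- one-step geometric decrease, eq. (21): under Condition 1 and
Assumption SA1, if `α ∈ (0,1)` satisfies `αP̄ ⪯ Qᵢ` for all modes, then for every
`d ≥ 1`, `x` and `(u,i) ∈ H*_d(x)`, `V*_{d-1}(Aᵢx+Bᵢu) ≤ (1-α)·V*_d(x)`. -/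
theorem stmt12 {n m M : ℕ} (hn : 0 < n) (hm : 0 < m) (hM : 0 < M)
    (S : SwitchedLQR n m M)
    (hQ : ∀ i : Fin M, (S.Q i).PosDef) (hR : ∀ i : Fin M, (S.R i).PosDef)
    (Pund : Matrix (Fin n) (Fin n) ℝ) (hPund : Pund.PosSemidef)
    (hC : S.Cond1 Pund)
    (Pbar : Matrix (Fin n) (Fin n) ℝ) (hSA : S.SA1 Pbar)
    (α : ℝ) (hα0 : 0 < α) (hα1 : α < 1)
    (hαQ : ∀ i : Fin M, (S.Q i - α • Pbar).PosSemidef) :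
    ∀ (d : ℕ), 1 ≤ d → ∀ (x : Fin n → ℝ) (u : Fin m → ℝ) (i : Fin M),
      (u, i) ∈ S.HStar Pund d x →
      S.Vd Pund (d - 1) (S.A i *ᵥ x + S.B i *ᵥ u) ≤ (1 - α) * S.Vd Pund d x :=
  stmt12_general S hQ hR Pund hPund hC Pbar hSA α hα0 hαQ
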